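/- (Bound on MPGNN output.) Consider an l-step MPGNN as defined in the context, with input node features X whose rows have ℓ2-norm at most B. Let 𝒞 = C_φ C_ρ C_g ‖W_2‖₂ and assume d𝒞 ≠ 1. Then |f_w(X,A)|₂ ≤ B · C_φ · ‖W_1‖₂ ‖W_l‖₂ · ((d𝒞)^{l−1} − 1)/(d𝒞 − 1); in particular every output coordinate satisfies |f_w(X,A)[j]| ≤ B · C_φ · ‖W_1‖₂ ‖W_l‖₂ · ((d𝒞)^{l−1} − 1)/(d𝒞 − 1). -/

import Mathlib

open Finset

/-- Euclidean (ℓ2) norm of a vector in `ℝ^q`. -/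
noncomputable def l2norm {q : ℕ} (v : Fin q → ℝ) : ℝ := Real.sqrt (∑ j, v j ^ 2)

/-- Spectral norm of a real matrix: the operator norm induced by the Euclidean
vector norm, i.e. `sup {‖A v‖₂ : ‖v‖₂ ≤ 1}`. -/
noncomputable def specNorm {p q : ℕ} (A : Matrix (Fin p) (Fin q) ℝ) : ℝ :=
  sSup {r : ℝ | ∃ v : Fin q → ℝ, l2norm v ≤ 1 ∧ r = l2norm (A.mulVec v)}

/-- Frobenius norm of a real matrix. -/
noncomputable def frobNorm {p q : ℕ} (A : Matrix (Fin p) (Fin q) ℝ) : ℝ :=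
  Real.sqrt (∑ i, ∑ j, A i j ^ 2)

open scoped Matrix.Norms.L2Operator

lemma l2norm_eq_norm {q : ℕ} (v : Fin q → ℝ) :
    l2norm v = ‖(EuclideanSpace.equiv (Fin q) ℝ).symm v‖ := by
  rw [EuclideanSpace.norm_eq]
  simp [l2norm, Real.norm_eq_abs, sq_abs]

lemma specNorm_eq {p q : ℕ} (A : Matrix (Fin p) (Fin q) ℝ) : specNorm A = ‖A‖ := by
  rw [Matrix.l2_opNorm_def, ← ContinuousLinearMap.sSup_unitClosedBall_eq_norm]
  unfold specNorm
  congr 1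
  ext r
  constructor
  · rintro ⟨v, hv, rfl⟩
    refine ⟨(EuclideanSpace.equiv (Fin q) ℝ).symm v,
      Metric.mem_closedBall.2 (by rw [dist_zero_right, ← l2norm_eq_norm]; exact hv), ?_⟩
    rw [l2norm_eq_norm]
    rfl
  · rintro ⟨x, hx, rfl⟩
    refine ⟨x, ?_, ?_⟩
    · rw [l2norm_eq_norm]; exact mem_closedBall_zero_iff.1 hx
    · rw [l2norm_eq_norm]; rfl

lemma specNorm_nonneg {p q : ℕ} (A : Matrix (Fin p) (Fin q) ℝ) : 0 ≤ specNorm A := by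
  rw [specNorm_eq]; exact norm_nonneg _

lemma l2norm_mulVec {p q : ℕ} (A : Matrix (Fin p) (Fin q) ℝ) (v : Fin q → ℝ) :
    l2norm (A.mulVec v) ≤ specNorm A * l2norm v := by
  rw [specNorm_eq, l2norm_eq_norm, l2norm_eq_norm]
  exact Matrix.l2_opNorm_mulVec A ((EuclideanSpace.equiv (Fin q) ℝ).symm v)

lemma specNorm_transpose {p q : ℕ} (A : Matrix (Fin p) (Fin q) ℝ) :
    specNorm A.transpose = specNorm A := by
  have h : A.conjTranspose = A.transpose := by
    ext i j; simp [Matrix.conjTranspose_apply]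
  rw [specNorm_eq, specNorm_eq, ← Matrix.l2_opNorm_conjTranspose A, h]

lemma l2norm_vecMul {p q : ℕ} (W : Matrix (Fin p) (Fin q) ℝ) (v : Fin p → ℝ) :
    l2norm (Matrix.vecMul v W) ≤ specNorm W * l2norm v := by
  rw [← Matrix.mulVec_transpose, ← specNorm_transpose]
  exact l2norm_mulVec _ _

lemma l2norm_nonneg {q : ℕ} (v : Fin q → ℝ) : 0 ≤ l2norm v := Real.sqrt_nonneg _

lemma l2norm_zero {q : ℕ} : l2norm (fun _ : Fin q => (0:ℝ)) = 0 := by simp [l2norm]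

lemma abs_le_l2norm {q : ℕ} (v : Fin q → ℝ) (j : Fin q) : |v j| ≤ l2norm v := by
  rw [l2norm, ← Real.sqrt_sq_eq_abs]
  exact Real.sqrt_le_sqrt (Finset.single_le_sum (fun i _ => sq_nonneg (v i)) (Finset.mem_univ j))

lemma l2norm_add_le {q : ℕ} (v w : Fin q → ℝ) :
    l2norm (fun j => v j + w j) ≤ l2norm v + l2norm w := by
  rw [l2norm_eq_norm, l2norm_eq_norm, l2norm_eq_norm]
  exact norm_add_le ((EuclideanSpace.equiv (Fin q) ℝ).symm v)
    ((EuclideanSpace.equiv (Fin q) ℝ).symm w)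

lemma l2norm_smul {q : ℕ} (c : ℝ) (v : Fin q → ℝ) :
    l2norm (fun j => c * v j) = |c| * l2norm v := by
  rw [l2norm_eq_norm, l2norm_eq_norm, ← Real.norm_eq_abs]
  exact norm_smul c ((EuclideanSpace.equiv (Fin q) ℝ).symm v)

lemma l2norm_sum_smul_le {q : ℕ} {ι : Type*} (s : Finset ι) (c : ι → ℝ) (f : ι → Fin q → ℝ) :
    l2norm (fun j => ∑ i ∈ s, c i * f i j) ≤ ∑ i ∈ s, |c i| * l2norm (f i) := by
  classical
  induction s using Finset.cons_induction with
  | empty => simp [l2norm_zero]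
  | cons i s hi ih =>
    simp only [Finset.sum_cons]
    calc l2norm (fun j => c i * f i j + ∑ k ∈ s, c k * f k j)
        ≤ l2norm (fun j => c i * f i j) + l2norm (fun j => ∑ k ∈ s, c k * f k j) :=
          l2norm_add_le _ _
      _ ≤ |c i| * l2norm (f i) + ∑ k ∈ s, |c k| * l2norm (f k) := by
          rw [l2norm_smul]; exact add_le_add le_rfl ih

/-- `A` is the adjacency matrix of a simple undirected graph (0/1 entries, symmetric,
zero diagonal) with maximum node degree `d - 1`. -/
def IsSimpleAdj {n : ℕ} (d : ℕ) (A : Matrix (Fin n) (Fin n) ℝ) : Prop :=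
  (∀ i j, A i j = 0 ∨ A i j = 1) ∧ (∀ i j, A i j = A j i) ∧ (∀ i, A i i = 0) ∧
    ∀ i, ∑ j, A i j ≤ (d : ℝ) - 1

/-- The normalized graph Laplacian `L = D^{-1/2} (A + I) D^{-1/2}` where `D` is the
degree matrix of `Ã = A + I`; entrywise `L i j = Ã i j / (√(deg i) * √(deg j))`. -/
noncomputable def gLap {n : ℕ} (A : Matrix (Fin n) (Fin n) ℝ) :
    Matrix (Fin n) (Fin n) ℝ :=
  Matrix.of fun i j =>
    (A + 1) i j / (Real.sqrt (∑ k, (A + 1) i k) * Real.sqrt (∑ k, (A + 1) j k))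

/-- Row-wise application of a map `ℝ^h → ℝ^h` to a matrix. -/
noncomputable def rowMap {n h : ℕ} (f : (Fin h → ℝ) → Fin h → ℝ)
    (M : Matrix (Fin n) (Fin h) ℝ) : Matrix (Fin n) (Fin h) ℝ :=
  Matrix.of fun i => f (M i)

/-- `f` is `C`-Lipschitz with respect to the ℓ2 norm. -/
def LipL2 {h : ℕ} (C : ℝ) (f : (Fin h → ℝ) → Fin h → ℝ) : Prop :=
  ∀ x y, l2norm (fun i => f x i - f y i) ≤ C * l2norm (fun i => x i - y i)

/-- `Cin, Cout` are incidence matrices of a graph with `n` nodes, `c` directed edges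
and maximum node degree `d - 1`: 0/1 entries, each column of `Cout` has exactly one
nonzero entry, and each row of `Cin` sums to at most `d`. -/
def IsIncidence {n c : ℕ} (d : ℕ) (Cin Cout : Matrix (Fin n) (Fin c) ℝ) : Prop :=
  (∀ i k, Cin i k = 0 ∨ Cin i k = 1) ∧ (∀ i k, Cout i k = 0 ∨ Cout i k = 1) ∧
    (∀ k, ∑ i, Cout i k = 1) ∧ ∀ i, ∑ k, Cin i k ≤ (d : ℝ)

/-- Node representations of an MPGNN: `H 0 = 0` and
`H (k+1) = φ(X W₁ + ρ(Cin · g(Coutᵀ · H k)) W₂)`, with `g, ρ, φ` applied row-wise. -/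
noncomputable def mpH {n c h0 hd : ℕ} (Cin Cout : Matrix (Fin n) (Fin c) ℝ)
    (g ρ φ : (Fin hd → ℝ) → Fin hd → ℝ)
    (W1 : Matrix (Fin h0) (Fin hd) ℝ) (W2 : Matrix (Fin hd) (Fin hd) ℝ)
    (X : Matrix (Fin n) (Fin h0) ℝ) : ℕ → Matrix (Fin n) (Fin hd) ℝ
  | 0 => 0
  | (k + 1) =>
      rowMap φ
        (X * W1 + rowMap ρ (Cin * rowMap g (Cout.transpose * mpH Cin Cout g ρ φ W1 W2 X k)) * W2)

/-- The aggregated messages `M̄_{k+1} = Cin · g(Coutᵀ · H k)` of an MPGNN. -/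
noncomputable def mpMbar {n c h0 hd : ℕ} (Cin Cout : Matrix (Fin n) (Fin c) ℝ)
    (g ρ φ : (Fin hd → ℝ) → Fin hd → ℝ)
    (W1 : Matrix (Fin h0) (Fin hd) ℝ) (W2 : Matrix (Fin hd) (Fin hd) ℝ)
    (X : Matrix (Fin n) (Fin h0) ℝ) (k : ℕ) : Matrix (Fin n) (Fin hd) ℝ :=
  Cin * rowMap g (Cout.transpose * mpH Cin Cout g ρ φ W1 W2 X k)

/-- Output of an `l`-step MPGNN: the mean readout `(1/n) 1ₙ H_{l-1} W_l`. -/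
noncomputable def mpOut {n c h0 hd K : ℕ} (Cin Cout : Matrix (Fin n) (Fin c) ℝ)
    (g ρ φ : (Fin hd → ℝ) → Fin hd → ℝ)
    (W1 : Matrix (Fin h0) (Fin hd) ℝ) (W2 : Matrix (Fin hd) (Fin hd) ℝ)
    (Wl : Matrix (Fin hd) (Fin K) ℝ)
    (X : Matrix (Fin n) (Fin h0) ℝ) (l : ℕ) : Fin K → ℝ :=
  fun j => (1 / (n : ℝ)) * ∑ i, (mpH Cin Cout g ρ φ W1 W2 X (l - 1) * Wl) i j

lemma row_mul {n p q : ℕ} (M : Matrix (Fin n) (Fin p) ℝ) (W : Matrix (Fin p) (Fin q) ℝ)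
    (i : Fin n) : (M * W) i = Matrix.vecMul (M i) W := by
  ext j
  simp [Matrix.mul_apply, Matrix.vecMul, dotProduct]

lemma lip_zero {h : ℕ} {C : ℝ} {f : (Fin h → ℝ) → Fin h → ℝ} (hf : LipL2 C f)
    (hf0 : f 0 = 0) (x : Fin h → ℝ) : l2norm (f x) ≤ C * l2norm x := by
  have h1 := hf x 0
  rw [hf0] at h1
  simpa using h1

/-- Bound on the MPGNN output: with `𝒞 = C_φ C_ρ C_g ‖W₂‖₂` and `d𝒞 ≠ 1`,
`|f_w(X,A)|₂ ≤ B C_φ ‖W₁‖₂ ‖W_l‖₂ ((d𝒞)^{l−1} − 1)/(d𝒞 − 1)`, and in particular every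
output coordinate is bounded by the same quantity. -/
theorem mpgnn_output_bound {n c h0 hd K : ℕ} (hn : 0 < n) (d l : ℕ) (hl : 1 < l)
    (B : ℝ) (hB : 0 < B)
    (Cin Cout : Matrix (Fin n) (Fin c) ℝ) (hInc : IsIncidence d Cin Cout)
    (g ρ φ : (Fin hd → ℝ) → Fin hd → ℝ) (Cg Cρ Cφ : ℝ)
    (hCg : 0 ≤ Cg) (hCρ : 0 ≤ Cρ) (hCφ : 0 ≤ Cφ)
    (hg : LipL2 Cg g) (hρ : LipL2 Cρ ρ) (hφ : LipL2 Cφ φ)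
    (hg0 : g 0 = 0) (hρ0 : ρ 0 = 0) (hφ0 : φ 0 = 0)
    (W1 : Matrix (Fin h0) (Fin hd) ℝ) (W2 : Matrix (Fin hd) (Fin hd) ℝ)
    (Wl : Matrix (Fin hd) (Fin K) ℝ)
    (X : Matrix (Fin n) (Fin h0) ℝ) (hX : ∀ i, l2norm (X i) ≤ B)
    (𝒞 : ℝ) (h𝒞 : 𝒞 = Cφ * Cρ * Cg * specNorm W2) (hd𝒞 : (d : ℝ) * 𝒞 ≠ 1) :
    l2norm (mpOut Cin Cout g ρ φ W1 W2 Wl X l) ≤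
      B * Cφ * specNorm W1 * specNorm Wl *
        (((d : ℝ) * 𝒞) ^ (l - 1) - 1) / ((d : ℝ) * 𝒞 - 1) ∧
    ∀ j, |mpOut Cin Cout g ρ φ W1 W2 Wl X l j| ≤
      B * Cφ * specNorm W1 * specNorm Wl *
        (((d : ℝ) * 𝒞) ^ (l - 1) - 1) / ((d : ℝ) * 𝒞 - 1) := by
  classical
  obtain ⟨hCin01, hCout01, hCoutcol, hCinrow⟩ := hInc
  have hW2 := specNorm_nonneg W2
  have hW1 := specNorm_nonneg W1
  have hWl := specNorm_nonneg Wl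
  have h𝒞0 : 0 ≤ 𝒞 := by
    rw [h𝒞]; have := specNorm_nonneg W2; positivity
  set x : ℝ := (d : ℝ) * 𝒞 with hxdef
  have hx0 : 0 ≤ x := mul_nonneg (Nat.cast_nonneg d) h𝒞0
  set a : ℝ := B * Cφ * specNorm W1 with hadef
  have ha0 : 0 ≤ a := by positivity
  have key : ∀ k, ∀ i, l2norm (mpH Cin Cout g ρ φ W1 W2 X k i) ≤
      a * ∑ t ∈ Finset.range k, x ^ t := by
    intro k
    induction k with
    | zero =>
      intro i
      have h0 : mpH Cin Cout g ρ φ W1 W2 X 0 i = fun _ => (0:ℝ) := rfl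
      rw [h0, l2norm_zero]
      simp
    | succ k ih =>
      intro i
      set r : ℝ := a * ∑ t ∈ Finset.range k, x ^ t with hr
      have hr0 : 0 ≤ r := mul_nonneg ha0 (Finset.sum_nonneg fun t _ => pow_nonneg hx0 t)
      set H := mpH Cin Cout g ρ φ W1 W2 X k with hH
      have hrow1 : ∀ m, l2norm ((Cout.transpose * H) m) ≤ r := by
        intro m
        have hre : (Cout.transpose * H) m = fun j => ∑ i, Cout i m * H i j := by
          ext j; simp [Matrix.mul_apply, Matrix.transpose_apply]
        rw [hre]
        calc l2norm (fun j => ∑ i, Cout i m * H i j)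
            ≤ ∑ i, |Cout i m| * l2norm (H i) := l2norm_sum_smul_le _ _ _
          _ ≤ ∑ i, Cout i m * r := by
              refine Finset.sum_le_sum fun i _ => ?_
              rcases hCout01 i m with h | h
              · simp [h]
              · simp only [h, abs_one, one_mul]; exact ih i
          _ = r := by rw [← Finset.sum_mul, hCoutcol m, one_mul]
      have hrow2 : ∀ m, l2norm ((rowMap g (Cout.transpose * H)) m) ≤ Cg * r := by
        intro m
        have h2 : (rowMap g (Cout.transpose * H)) m = g ((Cout.transpose * H) m) := rfl
        rw [h2]
        exact le_trans (lip_zero hg hg0 _) (mul_le_mul_of_nonneg_left (hrow1 m) hCg)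
      have hrow3 : ∀ i, l2norm ((Cin * rowMap g (Cout.transpose * H)) i) ≤
          (d:ℝ) * (Cg * r) := by
        intro i
        set G := rowMap g (Cout.transpose * H) with hG
        have hre : (Cin * G) i = fun j => ∑ m, Cin i m * G m j := by
          ext j; simp [Matrix.mul_apply]
        rw [hre]
        calc l2norm (fun j => ∑ m, Cin i m * G m j)
            ≤ ∑ m, |Cin i m| * l2norm (G m) := l2norm_sum_smul_le _ _ _
          _ ≤ ∑ m, Cin i m * (Cg * r) := by
              refine Finset.sum_le_sum fun m _ => ?_
              rcases hCin01 i m with h | h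
              · simp [h]
              · simp only [h, abs_one, one_mul]; exact hrow2 m
          _ = (∑ m, Cin i m) * (Cg * r) := by rw [Finset.sum_mul]
          _ ≤ (d:ℝ) * (Cg * r) :=
              mul_le_mul_of_nonneg_right (hCinrow i) (mul_nonneg hCg hr0)
      have hrow5 : l2norm ((rowMap ρ (Cin * rowMap g (Cout.transpose * H)) * W2) i) ≤
          specNorm W2 * (Cρ * ((d:ℝ) * (Cg * r))) := by
        rw [row_mul]
        refine le_trans (l2norm_vecMul _ _) (mul_le_mul_of_nonneg_left ?_ hW2)
        have h4 : (rowMap ρ (Cin * rowMap g (Cout.transpose * H))) i =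
            ρ ((Cin * rowMap g (Cout.transpose * H)) i) := rfl
        rw [h4]
        exact le_trans (lip_zero hρ hρ0 _) (mul_le_mul_of_nonneg_left (hrow3 i) hCρ)
      have hrow6 : l2norm ((X * W1) i) ≤ specNorm W1 * B := by
        rw [row_mul]
        exact le_trans (l2norm_vecMul _ _) (mul_le_mul_of_nonneg_left (hX i) hW1)
      have hstep : mpH Cin Cout g ρ φ W1 W2 X (k + 1) i =
          φ ((X * W1 + rowMap ρ (Cin * rowMap g (Cout.transpose * H)) * W2) i) := rfl
      rw [hstep]
      have hadd : l2norm ((X * W1 + rowMap ρ (Cin * rowMap g (Cout.transpose * H)) * W2) i) ≤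
          specNorm W1 * B + specNorm W2 * (Cρ * ((d:ℝ) * (Cg * r))) := by
        have he : (X * W1 + rowMap ρ (Cin * rowMap g (Cout.transpose * H)) * W2) i =
            fun j => (X * W1) i j +
              (rowMap ρ (Cin * rowMap g (Cout.transpose * H)) * W2) i j := rfl
        rw [he]
        exact le_trans (l2norm_add_le _ _) (add_le_add hrow6 hrow5)
      calc l2norm (φ ((X * W1 + rowMap ρ (Cin * rowMap g (Cout.transpose * H)) * W2) i))
          ≤ Cφ * l2norm ((X * W1 + rowMap ρ (Cin * rowMap g (Cout.transpose * H)) * W2) i) :=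
            lip_zero hφ hφ0 _
        _ ≤ Cφ * (specNorm W1 * B + specNorm W2 * (Cρ * ((d:ℝ) * (Cg * r)))) :=
            mul_le_mul_of_nonneg_left hadd hCφ
        _ = a + x * r := by rw [hadef, hxdef, h𝒞]; ring
        _ = a * ∑ t ∈ Finset.range (k + 1), x ^ t := by
            rw [geom_sum_succ, hr]; ring
  -- final assembly
  set R : ℝ := a * ∑ t ∈ Finset.range (l - 1), x ^ t with hR
  have hR0 : 0 ≤ R := mul_nonneg ha0 (Finset.sum_nonneg fun t _ => pow_nonneg hx0 t)
  have hmain : l2norm (mpOut Cin Cout g ρ φ W1 W2 Wl X l) ≤ specNorm Wl * R := by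
    have hre : mpOut Cin Cout g ρ φ W1 W2 Wl X l =
        fun j => ∑ i, (1 / (n:ℝ)) * (mpH Cin Cout g ρ φ W1 W2 X (l - 1) * Wl) i j := by
      funext j
      simp [mpOut, Finset.mul_sum]
    rw [hre]
    calc l2norm (fun j => ∑ i, (1 / (n:ℝ)) * (mpH Cin Cout g ρ φ W1 W2 X (l - 1) * Wl) i j)
        ≤ ∑ _i : Fin n, |1 / (n:ℝ)| *
            (specNorm Wl * R) := by
          refine le_trans (l2norm_sum_smul_le _ _ _) (Finset.sum_le_sum fun i _ => ?_)
          refine mul_le_mul_of_nonneg_left ?_ (abs_nonneg _)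
          rw [row_mul]
          exact le_trans (l2norm_vecMul _ _)
            (mul_le_mul_of_nonneg_left (key (l - 1) i) hWl)
      _ = specNorm Wl * R := by
          rw [Finset.sum_const, Finset.card_univ, Fintype.card_fin, nsmul_eq_mul]
          rw [abs_of_nonneg (by positivity : (0:ℝ) ≤ 1 / (n:ℝ))]
          field_simp
  have hxne : x ≠ 1 := hd𝒞
  have heq : specNorm Wl * R =
      B * Cφ * specNorm W1 * specNorm Wl * (x ^ (l - 1) - 1) / (x - 1) := by
    rw [hR, geom_sum_eq hxne, hadef]
    ring
  rw [heq] at hmain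
  refine ⟨hmain, fun j => le_trans (abs_le_l2norm _ j) hmain⟩
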